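/- arXiv:0711.3136 — 6 statements merged into one kernel-verified Lean document; each statement's English description precedes it below -/
import Mathlib

section
/- Let A, B, C be events in a finite probability space such that (i) Pr(A∩C) ≥ Pr(A)Pr(C) and Pr(B∩C) ≥ Pr(B)Pr(C), and (ii) A and B are conditionally positively correlated given C and given the complement of C (i.e., Pr(A∩B|C) ≥ Pr(A|C)Pr(B|C) when Pr(C) > 0, and similarly for Cᶜ). Then Pr(A∩B) ≥ Pr(A)Pr(B). -/
/-!
Write `p = Pr C`, `q = Pr Cᶜ`. Splitting every event along `C` and clearing the conditional
denominators gives `p q Pr(A ∩ B) ≥ q Pr(A ∩ C) Pr(B ∩ C) + p Pr(A ∩ Cᶜ) Pr(B ∩ Cᶜ)`, and since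
`p + q = 1` the right-hand side exceeds `p q Pr A Pr B` by exactly the product of covariances
`(Pr(A ∩ C) - Pr A Pr C) (Pr(B ∩ C) - Pr B Pr C) ≥ 0`. If `p q = 0`, one of `C`, `Cᶜ` is almost
sure and conditioning on it changes nothing.
-/

open Finset

/-- Probability of a (finset) event under weights `w`. -/
def Pr {Ω : Type*} [Fintype Ω] (w : Ω → ℝ) (S : Finset Ω) : ℝ := ∑ x ∈ S, w x

lemma mul_le_mul_of_div_mul_div_le {p a b c : ℝ} (hp : 0 < p) (h : a / p * (b / p) ≤ c / p) :
    a * b ≤ c * p := by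
  rw [div_mul_div_comm, div_le_div_iff₀ (by positivity) hp] at h
  exact le_of_mul_le_mul_right (by linarith) hp

lemma add_mul_add_le_of_cov_nonneg {p q a₁ a₂ b₁ b₂ c₁ c₂ : ℝ} (hp : 0 < p) (hq : 0 < q)
    (hpq : p + q = 1) (ha : (a₁ + a₂) * p ≤ a₁) (hb : (b₁ + b₂) * p ≤ b₁)
    (h₁ : a₁ * b₁ ≤ c₁ * p) (h₂ : a₂ * b₂ ≤ c₂ * q) :
    (a₁ + a₂) * (b₁ + b₂) ≤ c₁ + c₂ := by
  have cov : a₁ * b₁ * q + a₂ * b₂ * p - (a₁ + a₂) * (b₁ + b₂) * (p * q)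
      = (a₁ - (a₁ + a₂) * p) * (b₁ - (b₁ + b₂) * p) := by
    rw [show q = 1 - p by linarith]; ring
  have cov_nonneg := mul_nonneg (sub_nonneg.2 ha) (sub_nonneg.2 hb)
  refine le_of_mul_le_mul_right ?_ (mul_pos hp hq)
  calc (a₁ + a₂) * (b₁ + b₂) * (p * q)
      ≤ a₁ * b₁ * q + a₂ * b₂ * p := by linarith
    _ ≤ c₁ * p * q + c₂ * q * p := by gcongr
    _ = (c₁ + c₂) * (p * q) := by ring

section Pr

variable {Ω : Type*} [Fintype Ω] (w : Ω → ℝ)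

lemma Pr_nonneg (hw : ∀ x, 0 ≤ w x) (S : Finset Ω) : 0 ≤ Pr w S :=
  sum_nonneg fun x _ => hw x

lemma Pr_mono (hw : ∀ x, 0 ≤ w x) {S T : Finset Ω} (h : S ⊆ T) : Pr w S ≤ Pr w T :=
  sum_le_sum_of_subset_of_nonneg h fun x _ _ => hw x

variable [DecidableEq Ω]

lemma Pr_inter_add_Pr_inter_compl (S C : Finset Ω) :
    Pr w (S ∩ C) + Pr w (S ∩ Cᶜ) = Pr w S := by
  rw [← sdiff_eq_inter_compl]
  exact sum_inter_add_sum_sdiff S C w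

lemma Pr_add_Pr_compl (hsum : ∑ x, w x = 1) (C : Finset Ω) : Pr w C + Pr w Cᶜ = 1 := by
  simpa only [univ_inter] using (Pr_inter_add_Pr_inter_compl w univ C).trans hsum

lemma Pr_inter_of_Pr_eq_one (hw : ∀ x, 0 ≤ w x) (hsum : ∑ x, w x = 1) {C : Finset Ω}
    (hC : Pr w C = 1) (S : Finset Ω) : Pr w (S ∩ C) = Pr w S := by
  have hCc : Pr w Cᶜ = 0 := by linarith [Pr_add_Pr_compl w hsum C]
  have hSCc : Pr w (S ∩ Cᶜ) = 0 :=
    le_antisymm (hCc ▸ Pr_mono w hw inter_subset_right) (Pr_nonneg w hw _)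
  linarith [Pr_inter_add_Pr_inter_compl w S C]

lemma Pr_inter_ge_of_cond_of_Pr_eq_one (hw : ∀ x, 0 ≤ w x) (hsum : ∑ x, w x = 1)
    {A B C : Finset Ω} (hC : Pr w C = 1)
    (hcond : 0 < Pr w C →
      Pr w (A ∩ B ∩ C) / Pr w C ≥ (Pr w (A ∩ C) / Pr w C) * (Pr w (B ∩ C) / Pr w C)) :
    Pr w (A ∩ B) ≥ Pr w A * Pr w B := by
  simpa only [hC, div_one, Pr_inter_of_Pr_eq_one w hw hsum hC] using
    hcond (hC ▸ one_pos)

end Pr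

/-- Lemma 1 of the paper: if A and B are each positively correlated with C,
and A, B are conditionally positively correlated given C and given Cᶜ,
then A and B are positively correlated. -/
theorem stmt_0 {Ω : Type*} [Fintype Ω] [DecidableEq Ω] (w : Ω → ℝ)
    (hw : ∀ x, 0 ≤ w x) (hsum : ∑ x, w x = 1)
    (A B C : Finset Ω)
    (hAC : Pr w (A ∩ C) ≥ Pr w A * Pr w C)
    (hBC : Pr w (B ∩ C) ≥ Pr w B * Pr w C)
    (hcondC : 0 < Pr w C →
      Pr w (A ∩ B ∩ C) / Pr w C ≥ (Pr w (A ∩ C) / Pr w C) * (Pr w (B ∩ C) / Pr w C))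
    (hcondCc : 0 < Pr w Cᶜ →
      Pr w (A ∩ B ∩ Cᶜ) / Pr w Cᶜ ≥ (Pr w (A ∩ Cᶜ) / Pr w Cᶜ) * (Pr w (B ∩ Cᶜ) / Pr w Cᶜ)) :
    Pr w (A ∩ B) ≥ Pr w A * Pr w B := by
  have hpq := Pr_add_Pr_compl w hsum C
  rcases (Pr_nonneg w hw C).eq_or_lt with hp | hp
  · exact Pr_inter_ge_of_cond_of_Pr_eq_one w hw hsum (by linarith) hcondCc
  rcases (Pr_nonneg w hw Cᶜ).eq_or_lt with hq | hq
  · exact Pr_inter_ge_of_cond_of_Pr_eq_one w hw hsum (by linarith) hcondC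
  rw [← Pr_inter_add_Pr_inter_compl w A C] at hAC
  rw [← Pr_inter_add_Pr_inter_compl w B C] at hBC
  rw [← Pr_inter_add_Pr_inter_compl w A C, ← Pr_inter_add_Pr_inter_compl w B C,
    ← Pr_inter_add_Pr_inter_compl w (A ∩ B) C]
  exact add_mul_add_le_of_cov_nonneg hp hq hpq hAC hBC
    (mul_le_mul_of_div_mul_div_le hp (hcondC hp)) (mul_le_mul_of_div_mul_div_le hq (hcondCc hq))
end

section
/- Let μ be a probability measure on {0,1}^E for a finite set E satisfying the positive lattice condition: μ(η)μ(τ) ≤ μ(η∧τ)μ(η∨τ) for all η, τ ∈ {0,1}^E, where ∧ and ∨ are coordinatewise min and max. Then for any F ⊆ E, e ∈ E\F, and configurations ξ ≤ ψ in {0,1}^F with μ(η ≡ ξ on F) > 0 and μ(η ≡ ψ on F) > 0, we have μ(η_e = 1 | η ≡ ξ on F) ≤ μ(η_e = 1 | η ≡ ψ on F). -/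
open Finset
open scoped Classical FinsetFamily

/-!
Let `A` be the configurations agreeing with `ξ` on `F` and having `η e = 1`, and `B` those
agreeing with `ψ` on `F`. Since `ξ ≤ ψ` on `F`, meets `A ⊼ B` agree with `ξ` on `F`, and joins
`A ⊻ B` agree with `ψ` on `F` and keep `η e = 1`. The four functions theorem (Ahlswede–Daykin)
applied to the log-supermodular weight `μ` then gives
`μ(A) μ(B) ≤ μ(ξ on F) μ(ψ on F, η e = 1)`, which is the claim after clearing denominators.
-/

lemma sum_mul_sum_le_of_infs_subset_of_sups_subset {α β : Type*} [DistribLattice α]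
    [DecidableEq α] [CommSemiring β] [LinearOrder β] [IsStrictOrderedRing β] [ExistsAddOfLE β]
    {μ : α → β} (hμ : 0 ≤ μ) (hplc : ∀ a b, μ a * μ b ≤ μ (a ⊓ b) * μ (a ⊔ b))
    {s t u v : Finset α} (hu : s ⊼ t ⊆ u) (hv : s ⊻ t ⊆ v) :
    (∑ a ∈ s, μ a) * ∑ a ∈ t, μ a ≤ (∑ a ∈ u, μ a) * ∑ a ∈ v, μ a :=
  (four_functions_theorem μ μ μ μ hμ hμ hμ hμ hplc s t).trans <|
    mul_le_mul (sum_le_sum_of_subset_of_nonneg hu fun a _ _ ↦ hμ a)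
      (sum_le_sum_of_subset_of_nonneg hv fun a _ _ ↦ hμ a) (sum_nonneg fun a _ ↦ hμ a)
      (sum_nonneg fun a _ ↦ hμ a)

section Agree

variable {ι β : Type*} [Lattice β] {F : Finset ι} {ξ ψ η τ : ι → β}

lemma inf_agree_of_agree_of_le (hle : ∀ f ∈ F, ξ f ≤ ψ f) (hη : ∀ f ∈ F, η f = ξ f)
    (hτ : ∀ f ∈ F, τ f = ψ f) : ∀ f ∈ F, (η ⊓ τ) f = ξ f := fun f hf ↦ by
  rw [Pi.inf_apply, hη f hf, hτ f hf, inf_eq_left.2 (hle f hf)]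

lemma sup_agree_of_agree_of_le (hle : ∀ f ∈ F, ξ f ≤ ψ f) (hη : ∀ f ∈ F, η f = ξ f)
    (hτ : ∀ f ∈ F, τ f = ψ f) : ∀ f ∈ F, (η ⊔ τ) f = ψ f := fun f hf ↦ by
  rw [Pi.sup_apply, hη f hf, hτ f hf, sup_eq_right.2 (hle f hf)]

end Agree

theorem stmt_2_general {E : Type*} [Fintype E] [DecidableEq E] (μ : (E → Bool) → ℝ)
    (hnn : ∀ η, 0 ≤ μ η)
    (hplc : ∀ η τ : E → Bool, μ η * μ τ ≤ μ (η ⊓ τ) * μ (η ⊔ τ))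
    (F : Finset E) (e : E) (ξ ψ : E → Bool)
    (hle : ∀ f ∈ F, ξ f ≤ ψ f)
    (hξpos : 0 < ∑ η ∈ Finset.univ.filter (fun η : E → Bool => ∀ f ∈ F, η f = ξ f), μ η)
    (hψpos : 0 < ∑ η ∈ Finset.univ.filter (fun η : E → Bool => ∀ f ∈ F, η f = ψ f), μ η) :
    (∑ η ∈ Finset.univ.filter (fun η : E → Bool => (∀ f ∈ F, η f = ξ f) ∧ η e = true), μ η) /
      (∑ η ∈ Finset.univ.filter (fun η : E → Bool => ∀ f ∈ F, η f = ξ f), μ η) ≤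
    (∑ η ∈ Finset.univ.filter (fun η : E → Bool => (∀ f ∈ F, η f = ψ f) ∧ η e = true), μ η) /
      (∑ η ∈ Finset.univ.filter (fun η : E → Bool => ∀ f ∈ F, η f = ψ f), μ η) := by
  rw [div_le_div_iff₀ hξpos hψpos]
  refine (sum_mul_sum_le_of_infs_subset_of_sups_subset hnn hplc ?_ ?_).trans_eq (mul_comm _ _)
  · intro c hc
    obtain ⟨η, hη, τ, hτ, rfl⟩ := mem_infs.1 hc
    simp only [mem_filter, mem_univ, true_and] at hη hτ ⊢
    exact inf_agree_of_agree_of_le hle hη.1 hτ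
  · intro c hc
    obtain ⟨η, hη, τ, hτ, rfl⟩ := mem_sups.1 hc
    simp only [mem_filter, mem_univ, true_and] at hη hτ ⊢
    exact ⟨sup_agree_of_agree_of_le hle hη.1 hτ, by simp [hη.2]⟩

/-- The positive lattice condition implies monotonicity of conditional
single-coordinate probabilities in the conditioning configuration. -/
theorem stmt_2 {E : Type*} [Fintype E] [DecidableEq E] (μ : (E → Bool) → ℝ)
    (hnn : ∀ η, 0 ≤ μ η) (hsum : ∑ η, μ η = 1)
    (hplc : ∀ η τ : E → Bool, μ η * μ τ ≤ μ (η ⊓ τ) * μ (η ⊔ τ))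
    (F : Finset E) (e : E) (he : e ∉ F) (ξ ψ : E → Bool)
    (hle : ∀ f ∈ F, ξ f ≤ ψ f)
    (hξpos : 0 < ∑ η ∈ Finset.univ.filter (fun η : E → Bool => ∀ f ∈ F, η f = ξ f), μ η)
    (hψpos : 0 < ∑ η ∈ Finset.univ.filter (fun η : E → Bool => ∀ f ∈ F, η f = ψ f), μ η) :
    (∑ η ∈ Finset.univ.filter (fun η : E → Bool => (∀ f ∈ F, η f = ξ f) ∧ η e = true), μ η) /
      (∑ η ∈ Finset.univ.filter (fun η : E → Bool => ∀ f ∈ F, η f = ξ f), μ η) ≤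
    (∑ η ∈ Finset.univ.filter (fun η : E → Bool => (∀ f ∈ F, η f = ψ f) ∧ η e = true), μ η) /
      (∑ η ∈ Finset.univ.filter (fun η : E → Bool => ∀ f ∈ F, η f = ψ f), μ η) :=
  stmt_2_general μ hnn hplc F e ξ ψ hle hξpos hψpos
end

section
/- Let G = (V,E) be a finite graph, p : E → (0,1), and q ≥ 1. Define the random cluster measure φ on {0,1}^E by φ(η) proportional to ∏_{e∈E} p_e^{η_e}(1−p_e)^{1−η_e} · q^{k(η)}, where k(η) is the number of connected components of the graph (V, {e : η_e = 1}). Then φ satisfies the positive lattice condition: φ(η)φ(τ) ≤ φ(η∧τ)φ(η∨τ) for all η, τ ∈ {0,1}^E. -/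
/-!
The Bernoulli factor of the weight is a product over edges, and coordinatewise
`{η_e ∧ τ_e, η_e ∨ τ_e} = {η_e, τ_e}`, so it contributes equally to both sides; since
`q ≥ 1`, what remains is the submodularity of the number of components `k`.
Adding an edge `ab` to a graph lowers `k` by one if `a` and `b` lie in different components,
and leaves it unchanged otherwise; the first case is rarer in a larger graph, so the drop
`k G - k (G ⊔ ab)` is antitone in `G`. Adding the edges of `H` one at a time to
`G ⊓ H ≤ G` gives `k G - k (G ⊔ H) ≤ k (G ⊓ H) - k H`.
-/

open Finset

/-- The open subgraph of a (multi)graph with edge index set `E`, endpoints `ends`. -/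
def openSub {V E : Type*} (ends : E → Sym2 V) (η : E → Bool) : SimpleGraph V :=
  SimpleGraph.fromEdgeSet {s | ∃ f, η f = true ∧ ends f = s}

/-- Number of connected components of the open subgraph. -/
noncomputable def numComp {V E : Type*} (ends : E → Sym2 V) (η : E → Bool) : ℕ :=
  Nat.card (openSub ends η).ConnectedComponent

/-- The (unnormalized) random-cluster weight. -/
noncomputable def rcWeight {V E : Type*} [Fintype E] (ends : E → Sym2 V)
    (p : E → ℝ) (q : ℝ) (η : E → Bool) : ℝ :=
  (∏ f, if η f then p f else 1 - p f) * q ^ numComp ends η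

/-- The random-cluster measure `φ_{p,q}`. -/
noncomputable def rcMeasure {V E : Type*} [Fintype V] [Fintype E] [DecidableEq E]
    (ends : E → Sym2 V) (p : E → ℝ) (q : ℝ) (η : E → Bool) : ℝ :=
  rcWeight ends p q η / ∑ τ : E → Bool, rcWeight ends p q τ

theorem prod_mul_prod_eq_prod_inf_mul_prod_sup {ι α M : Type*} [Fintype ι] [LinearOrder α]
    [CommMonoid M] (g : ι → α → M) (η τ : ι → α) :
    (∏ i, g i (η i)) * ∏ i, g i (τ i) = (∏ i, g i ((η ⊓ τ) i)) * ∏ i, g i ((η ⊔ τ) i) := by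
  simp only [← prod_mul_distrib, Pi.inf_apply, Pi.sup_apply]
  refine prod_congr rfl fun i _ => ?_
  rcases le_total (η i) (τ i) with h | h
  · rw [inf_eq_left.2 h, sup_eq_right.2 h]
  · rw [inf_eq_right.2 h, sup_eq_left.2 h, mul_comm]

namespace SimpleGraph

variable {V : Type*} {G G' : SimpleGraph V} {a b u v : V}

lemma Reachable.of_sup_edge (h : (G ⊔ edge a b).Reachable u v) :
    G.Reachable u v ∨ G.Reachable u a ∧ G.Reachable b v ∨ G.Reachable u b ∧ G.Reachable a v := by
  obtain ⟨w⟩ := h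
  induction w with
  | nil => exact .inl .rfl
  | cons hadj _ ih =>
    rcases hadj with hG | he
    · have hxy := hG.reachable
      rcases ih with h | ⟨h₁, h₂⟩ | ⟨h₁, h₂⟩
      · exact .inl (hxy.trans h)
      · exact .inr (.inl ⟨hxy.trans h₁, h₂⟩)
      · exact .inr (.inr ⟨hxy.trans h₁, h₂⟩)
    · obtain ⟨⟨rfl, rfl⟩ | ⟨rfl, rfl⟩, -⟩ := (edge_adj ..).1 he
      · rcases ih with h | ⟨h₁, h₂⟩ | ⟨-, h₂⟩
        · exact .inr (.inl ⟨.rfl, h⟩)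
        · exact .inl (h₁.symm.trans h₂)
        · exact .inl h₂
      · rcases ih with h | ⟨-, h₂⟩ | ⟨h₁, h₂⟩
        · exact .inr (.inr ⟨.rfl, h⟩)
        · exact .inl h₂
        · exact .inl (h₁.symm.trans h₂)

lemma card_connectedComponent_sup_edge_of_reachable (h : G.Reachable a b) :
    Nat.card (G ⊔ edge a b).ConnectedComponent = Nat.card G.ConnectedComponent := by
  refine (Nat.card_eq_of_bijective _
    ⟨?_, ConnectedComponent.surjective_map_ofLE (le_sup_left : G ≤ G ⊔ edge a b)⟩).symm
  refine ConnectedComponent.ind₂ fun u v huv => ConnectedComponent.sound ?_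
  simp only [ConnectedComponent.map_mk, Hom.coe_ofLE, id_eq, ConnectedComponent.eq] at huv
  rcases huv.of_sup_edge with huv | ⟨hua, hbv⟩ | ⟨hub, hav⟩
  · exact huv
  · exact hua.trans (h.trans hbv)
  · exact hub.trans (h.symm.trans hav)

lemma card_connectedComponent_sup_edge_add_one [Finite V] (h : ¬G.Reachable a b) :
    Nat.card (G ⊔ edge a b).ConnectedComponent + 1 = Nat.card G.ConnectedComponent := by
  classical
  set cb := G.connectedComponentMk b
  let π : {c // c ≠ cb} → (G ⊔ edge a b).ConnectedComponent :=
    fun c => c.1.map (Hom.ofLE le_sup_left)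
  have hπ : Function.Bijective π := by
    constructor
    · rintro ⟨c, hc⟩ ⟨d, hd⟩ hcd
      induction c using ConnectedComponent.ind with | h u => ?_
      induction d using ConnectedComponent.ind with | h v => ?_
      simp only [π, ConnectedComponent.map_mk, Hom.coe_ofLE, id_eq, ConnectedComponent.eq] at hcd
      rcases hcd.of_sup_edge with huv | ⟨-, hbv⟩ | ⟨hub, -⟩
      · exact Subtype.ext (ConnectedComponent.sound huv)
      · exact absurd (ConnectedComponent.sound hbv.symm) hd
      · exact absurd (ConnectedComponent.sound hub) hc
    · intro c'
      obtain ⟨c, rfl⟩ := ConnectedComponent.surjective_map_ofLE le_sup_left c'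
      by_cases hc : c = cb
      · have hab : (G ⊔ edge a b).Adj a b :=
          .inr ((edge_adj ..).2 ⟨.inl ⟨rfl, rfl⟩, fun hab => h (hab ▸ .rfl)⟩)
        refine ⟨⟨G.connectedComponentMk a, fun ha => h (ConnectedComponent.exact ha)⟩, ?_⟩
        simpa [π, hc, cb] using ConnectedComponent.sound hab.reachable
      · exact ⟨⟨c, hc⟩, rfl⟩
  rw [← Nat.card_eq_of_bijective π hπ, ← Finite.card_option,
    Nat.card_congr (Equiv.optionSubtypeNe cb)]

variable [Finite V]

lemma card_connectedComponent_add_sup_edge_le (h : G ≤ G') (a b : V) :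
    Nat.card G'.ConnectedComponent + Nat.card (G ⊔ edge a b).ConnectedComponent ≤
      Nat.card G.ConnectedComponent + Nat.card (G' ⊔ edge a b).ConnectedComponent := by
  by_cases hG' : G'.Reachable a b
  · rw [card_connectedComponent_sup_edge_of_reachable hG']
    have := ConnectedComponent.card_le_card_of_le (le_sup_left : G ≤ G ⊔ edge a b)
    omega
  · have := card_connectedComponent_sup_edge_add_one hG'
    have := card_connectedComponent_sup_edge_add_one fun hG => hG' (hG.mono h)
    omega

lemma card_connectedComponent_add_sup_le (h : G ≤ G') (H : SimpleGraph V) :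
    Nat.card G'.ConnectedComponent + Nat.card (G ⊔ H).ConnectedComponent ≤
      Nat.card G.ConnectedComponent + Nat.card (G' ⊔ H).ConnectedComponent := by
  rw [← fromEdgeSet_edgeSet H]
  induction H.edgeSet, H.edgeSet.toFinite using Set.Finite.induction_on generalizing G G' with
  | empty => simp [add_comm]
  | @insert e s _ _ ih =>
    induction e using Sym2.ind with | h a b => ?_
    rw [Set.insert_eq, fromEdgeSet_union, ← edge, ← sup_assoc, ← sup_assoc]
    have := card_connectedComponent_add_sup_edge_le h a b
    have := ih (sup_le_sup_right h (edge a b))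
    omega

theorem card_connectedComponent_add_le_inf_add_sup (G H : SimpleGraph V) :
    Nat.card G.ConnectedComponent + Nat.card H.ConnectedComponent ≤
      Nat.card (G ⊓ H).ConnectedComponent + Nat.card (G ⊔ H).ConnectedComponent := by
  have := card_connectedComponent_add_sup_le (inf_le_left : G ⊓ H ≤ G) H
  rw [sup_eq_right.2 inf_le_right] at this
  omega

end SimpleGraph

section RandomCluster

variable {V E : Type*} (ends : E → Sym2 V)

lemma openSub_monotone : Monotone (openSub ends) := by
  intro η τ h
  refine SimpleGraph.fromEdgeSet_mono ?_
  rintro _ ⟨f, hf, rfl⟩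
  exact ⟨f, Bool.le_iff_imp.1 (h f) hf, rfl⟩

lemma openSub_sup (η τ : E → Bool) :
    openSub ends (η ⊔ τ) = openSub ends η ⊔ openSub ends τ := by
  simp only [openSub, ← SimpleGraph.fromEdgeSet_union]
  congr 1
  ext s
  simp [or_and_right, exists_or]

lemma numComp_add_le_numComp_inf_add_numComp_sup [Finite V] (η τ : E → Bool) :
    numComp ends η + numComp ends τ ≤ numComp ends (η ⊓ τ) + numComp ends (η ⊔ τ) := by
  calc numComp ends η + numComp ends τ
      ≤ Nat.card (openSub ends η ⊓ openSub ends τ).ConnectedComponent +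
          Nat.card (openSub ends η ⊔ openSub ends τ).ConnectedComponent :=
        SimpleGraph.card_connectedComponent_add_le_inf_add_sup _ _
    _ ≤ numComp ends (η ⊓ τ) + numComp ends (η ⊔ τ) := by
        rw [numComp, numComp, openSub_sup]
        gcongr
        -- only `≤`: with parallel edges, `η` and `τ` may open different edges with the same ends
        exact SimpleGraph.ConnectedComponent.card_le_card_of_le
          ((openSub_monotone ends).map_inf_le η τ)

lemma rcWeight_mul_le [Finite V] [Fintype E] {p : E → ℝ} {q : ℝ}
    (hp₀ : ∀ f, 0 ≤ p f) (hp₁ : ∀ f, p f ≤ 1) (hq : 1 ≤ q) (η τ : E → Bool) :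
    rcWeight ends p q η * rcWeight ends p q τ ≤
      rcWeight ends p q (η ⊓ τ) * rcWeight ends p q (η ⊔ τ) := by
  set P : (E → Bool) → ℝ := fun σ => ∏ f, if σ f then p f else 1 - p f
  have hP : P η * P τ = P (η ⊓ τ) * P (η ⊔ τ) :=
    prod_mul_prod_eq_prod_inf_mul_prod_sup (fun f b => if b then p f else 1 - p f) η τ
  have hP₀ (σ : E → Bool) : 0 ≤ P σ :=
    prod_nonneg fun f _ => by split_ifs <;> linarith [hp₀ f, hp₁ f]
  calc rcWeight ends p q η * rcWeight ends p q τ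
      = P η * P τ * q ^ (numComp ends η + numComp ends τ) := by
        rw [rcWeight, rcWeight, pow_add]; ring
    _ ≤ P η * P τ * q ^ (numComp ends (η ⊓ τ) + numComp ends (η ⊔ τ)) := by
        have := numComp_add_le_numComp_inf_add_numComp_sup ends η τ
        have := mul_nonneg (hP₀ η) (hP₀ τ)
        gcongr
    _ = rcWeight ends p q (η ⊓ τ) * rcWeight ends p q (η ⊔ τ) := by
        rw [hP, rcWeight, rcWeight, pow_add]; ring

end RandomCluster

/-- The random-cluster measure with `q ≥ 1` satisfies the positive lattice condition. -/
theorem stmt_3 {V E : Type*} [Fintype V] [Fintype E] [DecidableEq E]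
    (ends : E → Sym2 V) (p : E → ℝ) (q : ℝ)
    (hp : ∀ f, 0 < p f ∧ p f < 1) (hq : 1 ≤ q)
    (η τ : E → Bool) :
    rcMeasure ends p q η * rcMeasure ends p q τ ≤
      rcMeasure ends p q (η ⊓ τ) * rcMeasure ends p q (η ⊔ τ) := by
  simp only [rcMeasure, div_mul_div_comm]
  exact div_le_div_of_nonneg_right
    (rcWeight_mul_le ends (fun f => (hp f).1.le) (fun f => (hp f).2.le) hq η τ) (mul_self_nonneg _)
end

section
/- Let G = (V,E) be a finite graph, ν the fractional fuzzy Potts measure built from a random cluster measure φ_{p,q} with q ≥ 1 and spin parameter α ∈ (0,1). Then for any vertex x ∈ V and any increasing event A ⊆ {±1}^V in the spins, the events A and {σ_x = 1} are positively correlated under ν: ν(A ∩ {σ_x = 1}) ≥ ν(A)·ν(σ_x = 1) = α·ν(A). -/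
/-! Conditionally on the random-cluster configuration `η`, the spins are `ζ ∘ connectedComponentMk`
for i.i.d. Bernoulli(α) cluster spins `ζ`, so both claims can be proved for each fixed `η` and then
averaged against `φ_{p,q}`. For a product of Bernoulli(α) measures, resampling the coordinate `ζ K`
of the cluster `K` of `x` leaves the measure invariant. Forcing that coordinate to `true` gives
`ν(σ_x = 1) = α`, and since forcing it only raises the spins, it can only increase the probability
of an increasing event. -/

open Finset
open scoped Classical

/-- Probability that i.i.d. Bernoulli(α) cluster spins for the open subgraph of `η`
produce the spin configuration `σ` (`true` = spin +1, `false` = spin −1). -/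
noncomputable def colorWeight {V E : Type*} (ends : E → Sym2 V) (α : ℝ)
    (η : E → Bool) (σ : V → Bool) : ℝ :=
  if ∀ u v : V, (openSub ends η).Reachable u v → σ u = σ v then
    α ^ Nat.card {K : (openSub ends η).ConnectedComponent //
        ∃ v, (openSub ends η).connectedComponentMk v = K ∧ σ v = true} *
      (1 - α) ^ Nat.card {K : (openSub ends η).ConnectedComponent //
        ∃ v, (openSub ends η).connectedComponentMk v = K ∧ σ v = false}
  else 0

/-- The fractional fuzzy Potts measure `ν_{φ,α}` built from the random-cluster
measure `φ_{p,q}`. -/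
noncomputable def ffpMeasure {V E : Type*} [Fintype V] [Fintype E] [DecidableEq E]
    (ends : E → Sym2 V) (p : E → ℝ) (q α : ℝ) (σ : V → Bool) : ℝ :=
  ∑ η : E → Bool, rcMeasure ends p q η * colorWeight ends α η σ

noncomputable def bernoulliWeight {ι : Type*} [Fintype ι] (α : ℝ) (ζ : ι → Bool) : ℝ :=
  ∏ i, if ζ i then α else 1 - α

section bernoulliWeight

variable {ι : Type*} [Fintype ι] {α : ℝ}

lemma bernoulliWeight_nonneg (h0 : 0 ≤ α) (h1 : α ≤ 1) (ζ : ι → Bool) :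
    0 ≤ bernoulliWeight α ζ :=
  prod_nonneg fun i _ => by cases ζ i <;> simp <;> linarith

variable [DecidableEq ι]

lemma sum_bernoulliWeight : ∑ ζ : ι → Bool, bernoulliWeight α ζ = 1 := by
  have h := Fintype.prod_sum fun (_ : ι) (b : Bool) => if b then α else 1 - α
  simp only [Fintype.sum_bool, if_true, Bool.false_eq_true, if_false, add_sub_cancel,
    prod_const_one] at h
  exact h.symm

lemma bernoulliWeight_piSplitAt_symm (i : ι) (b : Bool) (r : {j // j ≠ i} → Bool) :
    bernoulliWeight α ((Equiv.piSplitAt i fun _ => Bool).symm (b, r)) =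
      (if b then α else 1 - α) * ∏ j, if r j then α else 1 - α := by
  rw [bernoulliWeight, Fintype.prod_eq_mul_prod_subtype_ne _ i]
  simp [Equiv.piSplitAt_symm_apply, fun j : {j // j ≠ i} => j.2]

lemma sum_bernoulliWeight_mul_eq_sum_resample (i : ι) (F : (ι → Bool) → ℝ) :
    ∑ ζ, bernoulliWeight α ζ * F ζ =
      ∑ ζ, bernoulliWeight α ζ *
        (α * F (Function.update ζ i true) + (1 - α) * F (Function.update ζ i false)) := by
  have hupd (b c : Bool) (r : {j // j ≠ i} → Bool) :
      Function.update ((Equiv.piSplitAt i fun _ => Bool).symm (b, r)) i c =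
        (Equiv.piSplitAt i fun _ => Bool).symm (c, r) := by
    funext j
    by_cases h : j = i
    · subst h; simp [Equiv.piSplitAt_symm_apply]
    · simp [Equiv.piSplitAt_symm_apply, h]
  simp only [← (Equiv.piSplitAt i fun _ => Bool).symm.sum_comp, Fintype.sum_prod_type_right,
    Fintype.sum_bool, bernoulliWeight_piSplitAt_symm, hupd]
  refine sum_congr rfl fun r _ => ?_
  simp only [if_true, Bool.false_eq_true, if_false]
  ring

lemma sum_filter_bernoulliWeight_apply_eq_true (i : ι) :
    ∑ ζ ∈ univ.filter (fun ζ : ι → Bool => ζ i = true), bernoulliWeight α ζ = α := by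
  have h := sum_bernoulliWeight_mul_eq_sum_resample (α := α) i fun ζ => if ζ i = true then 1 else 0
  simp only [mul_ite, mul_one, mul_zero, Function.update_self, if_true, Bool.false_eq_true,
    if_false, add_zero] at h
  rw [sum_filter, h, ← sum_mul, sum_bernoulliWeight, one_mul]

lemma mul_sum_filter_bernoulliWeight_le (h0 : 0 ≤ α) (h1 : α ≤ 1) (i : ι)
    (Q : (ι → Bool) → Prop) [DecidablePred Q] (hQ : ∀ ζ, Q ζ → Q (Function.update ζ i true)) :
    α * ∑ ζ ∈ univ.filter Q, bernoulliWeight α ζ ≤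
      ∑ ζ ∈ univ.filter (fun ζ => Q ζ ∧ ζ i = true), bernoulliWeight α ζ := by
  have h := sum_bernoulliWeight_mul_eq_sum_resample (α := α) i
    fun ζ => if Q ζ ∧ ζ i = true then 1 else 0
  simp only [Function.update_self, Bool.false_eq_true, and_true, and_false, if_false,
    mul_zero, add_zero] at h
  rw [sum_filter, sum_filter, mul_sum]
  simp only [← mul_boole _ (bernoulliWeight α _), h]
  refine sum_le_sum fun ζ _ => ?_
  rw [mul_left_comm]
  gcongr
  · exact bernoulliWeight_nonneg h0 h1 ζ
  · split_ifs with hζ hζ' <;> norm_num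
    exact hζ' (hQ ζ hζ)

end bernoulliWeight

section colorWeight

variable {V E : Type*} (ends : E → Sym2 V) (α : ℝ) (η : E → Bool)

lemma colorWeight_eq_zero_of_notMem_range (σ : V → Bool)
    (hσ : σ ∉ Set.range fun ζ : (openSub ends η).ConnectedComponent → Bool =>
      ζ ∘ (openSub ends η).connectedComponentMk) :
    colorWeight ends α η σ = 0 := by
  refine if_neg fun hconst => hσ ⟨fun K => σ K.out, funext fun v => ?_⟩
  exact hconst _ _ (SimpleGraph.ConnectedComponent.exact (Quot.out_eq _))

variable [Fintype V] [DecidableEq V]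

lemma colorWeight_comp_connectedComponentMk (ζ : (openSub ends η).ConnectedComponent → Bool) :
    colorWeight ends α η (ζ ∘ (openSub ends η).connectedComponentMk) = bernoulliWeight α ζ := by
  have hconst : ∀ u v, (openSub ends η).Reachable u v →
      ζ ((openSub ends η).connectedComponentMk u) = ζ ((openSub ends η).connectedComponentMk v) :=
    fun u v h => congrArg ζ (SimpleGraph.ConnectedComponent.sound h)
  have hcard (b : Bool) : Nat.card {K : (openSub ends η).ConnectedComponent //
      ∃ v, (openSub ends η).connectedComponentMk v = K ∧
        ζ ((openSub ends η).connectedComponentMk v) = b}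
      = #(univ.filter fun K => ζ K = b) := by
    rw [← Fintype.card_subtype, ← Nat.card_eq_fintype_card]
    refine Nat.card_congr (Equiv.subtypeEquivRight fun K => ?_)
    induction K using SimpleGraph.ConnectedComponent.ind
    exact ⟨fun ⟨v, hv, hb⟩ => hv ▸ hb, fun hb => ⟨_, rfl, hb⟩⟩
  simp only [colorWeight, Function.comp_apply, if_pos hconst, hcard, bernoulliWeight, prod_ite,
    prod_const, Bool.not_eq_true]

lemma sum_filter_colorWeight (P : (V → Bool) → Prop) [DecidablePred P] :
    ∑ σ ∈ univ.filter P, colorWeight ends α η σ =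
      ∑ ζ ∈ univ.filter fun ζ => P (ζ ∘ (openSub ends η).connectedComponentMk),
        bernoulliWeight α ζ := by
  rw [sum_filter, sum_filter]
  refine (Fintype.sum_of_injective (· ∘ (openSub ends η).connectedComponentMk) ?_ _ _
    (fun σ hσ => ?_) fun ζ => ?_).symm
  · exact Function.Surjective.injective_comp_right
      (SimpleGraph.ConnectedComponent.ind fun v => ⟨v, rfl⟩)
  · rw [colorWeight_eq_zero_of_notMem_range ends α η σ hσ, ite_self]
  · rw [colorWeight_comp_connectedComponentMk]

lemma sum_filter_colorWeight_apply_eq_true (x : V) :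
    ∑ σ ∈ univ.filter (fun σ : V → Bool => σ x = true), colorWeight ends α η σ = α := by
  rw [sum_filter_colorWeight]
  exact sum_filter_bernoulliWeight_apply_eq_true _

lemma mul_sum_filter_colorWeight_le (h0 : 0 ≤ α) (h1 : α ≤ 1) (x : V) {A : Set (V → Bool)}
    (hA : IsUpperSet A) :
    α * ∑ σ ∈ univ.filter (· ∈ A), colorWeight ends α η σ ≤
      ∑ σ ∈ univ.filter (fun σ => σ ∈ A ∧ σ x = true), colorWeight ends α η σ := by
  rw [sum_filter_colorWeight, sum_filter_colorWeight]
  refine mul_sum_filter_bernoulliWeight_le h0 h1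
    ((openSub ends η).connectedComponentMk x) _ fun ζ hζ => hA (fun v => ?_) hζ
  exact (le_update_iff.2 ⟨le_top, fun _ _ => le_rfl⟩ :
    ζ ≤ Function.update ζ _ true) _

end colorWeight

section randomCluster

variable {V E : Type*} [Fintype E] (ends : E → Sym2 V) {p : E → ℝ} {q : ℝ}

lemma rcWeight_pos (hp : ∀ f, 0 < p f ∧ p f < 1) (hq : 0 < q) (η : E → Bool) :
    0 < rcWeight ends p q η := by
  refine mul_pos (prod_pos fun f _ => ?_) (pow_pos hq _)
  split_ifs
  · exact (hp f).1
  · linarith [(hp f).2]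

variable [Fintype V] [DecidableEq E]

lemma rcMeasure_nonneg (hp : ∀ f, 0 < p f ∧ p f < 1) (hq : 0 < q) (η : E → Bool) :
    0 ≤ rcMeasure ends p q η :=
  div_nonneg (rcWeight_pos ends hp hq η).le (sum_nonneg fun τ _ => (rcWeight_pos ends hp hq τ).le)

lemma sum_rcMeasure (hp : ∀ f, 0 < p f ∧ p f < 1) (hq : 0 < q) :
    ∑ η, rcMeasure ends p q η = 1 := by
  simp only [rcMeasure]
  rw [← sum_div, div_self]
  exact (sum_pos (fun η _ => rcWeight_pos ends hp hq η) univ_nonempty).ne'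

lemma sum_ffpMeasure (α : ℝ) (s : Finset (V → Bool)) :
    ∑ σ ∈ s, ffpMeasure ends p q α σ =
      ∑ η, rcMeasure ends p q η * ∑ σ ∈ s, colorWeight ends α η σ := by
  simp only [ffpMeasure, mul_sum]
  exact sum_comm

end randomCluster

/-- Under the fractional fuzzy Potts measure, any increasing event `A` is
positively correlated with `{σ_x = 1}`, and `ν(σ_x = 1) = α`. -/
theorem stmt_9 {V E : Type*} [Fintype V] [Fintype E] [DecidableEq V] [DecidableEq E]
    (ends : E → Sym2 V) (p : E → ℝ) (q α : ℝ)
    (hp : ∀ f, 0 < p f ∧ p f < 1) (hq : 1 ≤ q) (hα : 0 < α ∧ α < 1)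
    (x : V) (A : Set (V → Bool))
    (hA : ∀ σ τ : V → Bool, σ ≤ τ → σ ∈ A → τ ∈ A) :
    (∑ σ ∈ Finset.univ.filter (fun σ : V → Bool => σ x = true), ffpMeasure ends p q α σ) = α
    ∧ (∑ σ ∈ Finset.univ.filter (fun σ : V → Bool => σ ∈ A ∧ σ x = true),
        ffpMeasure ends p q α σ) ≥
      α * ∑ σ ∈ Finset.univ.filter (fun σ : V → Bool => σ ∈ A), ffpMeasure ends p q α σ := by
  have hq₀ : 0 < q := by linarith
  refine ⟨?_, ?_⟩
  · simp only [sum_ffpMeasure, sum_filter_colorWeight_apply_eq_true, ← sum_mul,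
      sum_rcMeasure ends hp hq₀, one_mul]
  · rw [ge_iff_le, sum_ffpMeasure, sum_ffpMeasure, mul_sum]
    refine sum_le_sum fun η _ => ?_
    rw [mul_left_comm]
    exact mul_le_mul_of_nonneg_left
      (mul_sum_filter_colorWeight_le ends α η hα.1.le hα.2.le x fun σ τ => hA σ τ)
      (rcMeasure_nonneg ends hp hq₀ η)
end

section
/- Let G be the graph consisting of two vertices x and y joined by an edge e together with m internally disjoint paths of length 2 between x and y (so G has m+2 vertices and 2m+1 edges). Under the uniform measure on spanning forests of G (spanning subgraphs with no cycles), if m > 6 then the events {e is in the forest} and {the forest is connected, i.e., a spanning tree} are strictly negatively correlated: Pr(e ∈ F and F spanning tree) < Pr(e ∈ F)·Pr(F spanning tree). -/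
/-!
A spanning subgraph is determined by whether it contains `xy` and which of `xz_i`, `yz_i` it
contains. It is a forest iff no path `x – z_i – y` is complete, or `xy` is absent and exactly one
is (acyclicity being certified by a parent function that decreases a rank); it is moreover a tree
iff every `z_i` is covered and `x`, `y` are joined. Hence there are `2^m` trees and `3^m` forests
containing `xy`, `2^m + m 2^(m-1)` trees and `2·3^m + m 3^(m-1)` forests, and after dividing by
`2^(m-1) 3^(m-1)` the claimed inequality reads `2m + 12 < 3m + 6`, i.e. `6 < m`.
-/

/-- The graph on vertices `x = 0`, `y = 1`, `z_1, …, z_m` consisting of the edge `xy`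
together with the `m` paths `x – z_i – y`. -/
def thetaGraph (m : ℕ) : SimpleGraph (Fin (m + 2)) :=
  SimpleGraph.fromEdgeSet
    ({s((0 : Fin (m + 2)), (1 : Fin (m + 2)))} ∪
      {s | ∃ i : Fin m, s = s((0 : Fin (m + 2)), (⟨i.1 + 2, by omega⟩ : Fin (m + 2))) ∨
        s = s((1 : Fin (m + 2)), (⟨i.1 + 2, by omega⟩ : Fin (m + 2)))})

open SimpleGraph Finset

namespace SimpleGraph

variable {V : Type*} {G : SimpleGraph V}

lemma Reachable.eq_of_forall_adj {α : Type*} {φ : V → α} (h : ∀ u v, G.Adj u v → φ u = φ v)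
    {u v : V} (huv : G.Reachable u v) : φ u = φ v := by
  rw [reachable_iff_reflTransGen] at huv
  induction huv with
  | refl => rfl
  | tail _ hadj ih => exact ih.trans (h _ _ hadj)

theorem isBridge_of_forall_adj_parent (p : V → V) (rank : V → ℕ)
    (hrank : ∀ v, p v ≠ v → rank (p v) < rank v) (hadj : ∀ u v, G.Adj u v → v = p u ∨ u = p v)
    {u : V} (hu : G.Adj u (p u)) : G.IsBridge s(u, p u) := by
  have hle (n : ℕ) : ∀ v, rank (p^[n] v) ≤ rank v := by
    induction n with
    | zero => exact fun _ => le_rfl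
    | succ n ih =>
      refine fun v => (ih (p v)).trans ?_
      by_cases hv : p v = v
      · rw [hv]
      · exact (hrank v hv).le
  -- Without the edge `u – p u`, the descendants of `u` are closed under adjacency, and `p u` is
  -- not one of them because the rank decreases along `p`.
  set IsDescendant : V → Prop := fun w => ∃ n, p^[n] w = u
  have hstep (w : V) (hw : w ≠ u) : IsDescendant (p w) = IsDescendant w := by
    refine propext ⟨fun ⟨n, hn⟩ => ⟨n + 1, hn⟩, ?_⟩
    rintro ⟨_ | n, hn⟩
    · exact absurd hn hw
    · exact ⟨n, hn⟩
  have hconst (w w' : V) (hww' : (G.deleteEdges {s(u, p u)}).Adj w w') :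
      IsDescendant w = IsDescendant w' := by
    rw [deleteEdges_adj, Set.mem_singleton_iff] at hww'
    obtain ⟨hww', hne⟩ := hww'
    rcases hadj w w' hww' with rfl | rfl
    · exact (hstep w (by rintro rfl; exact hne rfl)).symm
    · exact hstep w' (by rintro rfl; exact hne Sym2.eq_swap)
  rw [isBridge_iff]
  intro hr
  obtain ⟨n, hn⟩ : IsDescendant (p u) := cast (hr.eq_of_forall_adj hconst) ⟨0, rfl⟩
  have hrank_le := hle n (p u)
  rw [hn] at hrank_le
  exact (hrank u hu.ne.symm).not_ge hrank_le

theorem isAcyclic_of_forall_adj_parent (p : V → V) (rank : V → ℕ)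
    (hrank : ∀ v, p v ≠ v → rank (p v) < rank v) (hadj : ∀ u v, G.Adj u v → v = p u ∨ u = p v) :
    G.IsAcyclic := by
  rw [isAcyclic_iff_forall_adj_isBridge]
  intro u v huv
  rcases hadj u v huv with rfl | rfl
  · exact isBridge_of_forall_adj_parent p rank hrank hadj huv
  · rw [Sym2.eq_swap]
    exact isBridge_of_forall_adj_parent p rank hrank hadj huv.symm

lemma not_isAcyclic_of_square {a b c d : V} (hab : G.Adj a b) (hbc : G.Adj b c) (hcd : G.Adj c d)
    (hda : G.Adj d a) (hac : a ≠ c) (hbd : b ≠ d) : ¬G.IsAcyclic := by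
  intro h
  refine h (.cons hab (.cons hbc (.cons hcd (.cons hda .nil)))) ?_
  simp [Walk.isCycle_def, hab.ne, hbc.ne, hcd.ne, hda.ne, hab.ne.symm, hda.ne.symm, hac, hbd,
    hac.symm]

lemma not_isAcyclic_of_triangle {a b c : V} (hab : G.Adj a b) (hbc : G.Adj b c)
    (hca : G.Adj c a) : ¬G.IsAcyclic := by
  classical
  exact fun h => h.cliqueFree le_rfl {a, b, c} (is3Clique_triple_iff.mpr ⟨hab, hca.symm, hbc⟩)

end SimpleGraph

theorem Fintype.card_filter_exists_mem_forall_ne_mem {ι α : Type*} [Fintype ι] [DecidableEq ι]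
    [Fintype α] [DecidableEq α] {s t : Finset α} (hst : Disjoint s t)
    [DecidablePred fun g : ι → α => ∃ i, g i ∈ s ∧ ∀ j ≠ i, g j ∈ t] :
    #{g : ι → α | ∃ i, g i ∈ s ∧ ∀ j ≠ i, g j ∈ t} = card ι * (#s * #t ^ (card ι - 1)) := by
  have hunion : ({g : ι → α | ∃ i, g i ∈ s ∧ ∀ j ≠ i, g j ∈ t} : Finset _) =
      univ.biUnion fun i => piFinset (Function.update (fun _ => t) i s) := by
    ext g
    simp only [mem_filter, mem_univ, true_and, mem_biUnion, mem_piFinset]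
    refine exists_congr fun i => ⟨fun ⟨hi, hj⟩ j => ?_,
      fun h => ⟨by simpa using h i, fun j hj => by simpa [hj] using h j⟩⟩
    rcases eq_or_ne j i with rfl | hji
    · simpa using hi
    · simpa [hji] using hj j hji
  rw [hunion, card_biUnion]
  · have hprod (i : ι) :
        ∏ j, #(Function.update (fun _ => t) i s j) = #s * #t ^ (card ι - 1) := by
      rw [Fintype.prod_eq_mul_prod_compl i, Function.update_self,
        Finset.prod_congr rfl fun j hj => by rw [Function.update_of_ne (by simpa using hj)],
        prod_const, card_compl, card_singleton]
    simp [hprod]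
  · intro i _ j _ hij
    simp only [Function.onFun, Finset.disjoint_left, Fintype.mem_piFinset]
    intro g hgi hgj
    exact Finset.disjoint_left.mp hst (by simpa using hgi i) (by simpa [hij] using hgj i)

namespace ThetaGraph

variable {m : ℕ}

/-- `mid i` is the vertex `z_(i+1)`; a code `(b, g)` stands for the subgraph containing `xy` iff
`b`, and `xz_(i+1)`, `yz_(i+1)` iff `(g i).1`, `(g i).2` respectively. -/
abbrev Code (m : ℕ) := Bool × (Fin m → Bool × Bool)

def mid (i : Fin m) : Fin (m + 2) := i.succ.succ

@[simp] lemma mid_ne_zero (i : Fin m) : mid i ≠ 0 := Fin.succ_ne_zero _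
@[simp] lemma mid_ne_one (i : Fin m) : mid i ≠ 1 := by
  rw [mid, ← Fin.succ_zero_eq_one, Ne, Fin.succ_inj]; exact Fin.succ_ne_zero _
@[simp] lemma zero_ne_mid (i : Fin m) : 0 ≠ mid i := (mid_ne_zero i).symm
@[simp] lemma one_ne_mid (i : Fin m) : 1 ≠ mid i := (mid_ne_one i).symm
@[simp] lemma mid_inj {i j : Fin m} : mid i = mid j ↔ i = j := by simp [mid]

@[simp] lemma cons_cons_mid {α : Type*} (a b : α) (f : Fin m → α) (i : Fin m) :
    (Fin.cons a (Fin.cons b f : Fin (m + 1) → α) : Fin (m + 2) → α) (mid i) = f i := rfl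

lemma vertex_cases (v : Fin (m + 2)) : v = 0 ∨ v = 1 ∨ ∃ i, v = mid i := by
  induction v using Fin.cases with
  | zero => exact .inl rfl
  | succ v =>
    induction v using Fin.cases with
    | zero => exact .inr (.inl rfl)
    | succ i => exact .inr (.inr ⟨i, rfl⟩)

def ofCode (c : Code m) : SimpleGraph (Fin (m + 2)) :=
  fromEdgeSet {s | (c.1 ∧ s = s(0, 1)) ∨
    ∃ i, ((c.2 i).1 ∧ s = s(0, mid i)) ∨ ((c.2 i).2 ∧ s = s(1, mid i))}

section Adj

variable (c : Code m) (i j : Fin m)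

@[simp] lemma ofCode_adj_zero_one : (ofCode c).Adj 0 1 ↔ c.1 := by simp [ofCode]
@[simp] lemma ofCode_adj_zero_mid : (ofCode c).Adj 0 (mid i) ↔ (c.2 i).1 := by simp [ofCode]
@[simp] lemma ofCode_adj_one_mid : (ofCode c).Adj 1 (mid i) ↔ (c.2 i).2 := by simp [ofCode]
@[simp] lemma not_ofCode_adj_mid_mid : ¬(ofCode c).Adj (mid i) (mid j) := by simp [ofCode]

@[simp] lemma ofCode_adj_one_zero : (ofCode c).Adj 1 0 ↔ c.1 := by
  rw [adj_comm, ofCode_adj_zero_one]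
@[simp] lemma ofCode_adj_mid_zero : (ofCode c).Adj (mid i) 0 ↔ (c.2 i).1 := by
  rw [adj_comm, ofCode_adj_zero_mid]
@[simp] lemma ofCode_adj_mid_one : (ofCode c).Adj (mid i) 1 ↔ (c.2 i).2 := by
  rw [adj_comm, ofCode_adj_one_mid]

end Adj

lemma thetaGraph_eq_ofCode : thetaGraph m = ofCode (true, fun _ => (true, true)) := by
  simp only [thetaGraph, ofCode]
  congr 1
  ext s
  simp only [Set.mem_union, Set.mem_singleton_iff, Set.mem_ofPred_eq, true_and]
  rfl

lemma ofCode_le (c : Code m) : ofCode c ≤ thetaGraph m := by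
  intro u v
  rw [thetaGraph_eq_ofCode]
  rcases vertex_cases u with rfl | rfl | ⟨i, rfl⟩ <;>
    rcases vertex_cases v with rfl | rfl | ⟨j, rfl⟩ <;> simp

lemma ofCode_injective : Function.Injective (ofCode (m := m)) := by
  intro c c' h
  have hadj := fun u v => congrArg (fun G => G.Adj u v) h
  ext1
  · simpa using hadj 0 1
  · funext i
    ext1
    · simpa using hadj 0 (mid i)
    · simpa using hadj 1 (mid i)

lemma exists_ofCode_eq {H : SimpleGraph (Fin (m + 2))} (hH : H ≤ thetaGraph m) :
    ∃ c, ofCode c = H := by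
  classical
  refine ⟨(H.Adj 0 1, fun i => (H.Adj 0 (mid i), H.Adj 1 (mid i))), ?_⟩
  ext u v
  have hθ := @hH u v
  rw [thetaGraph_eq_ofCode] at hθ
  have hmid0 (i : Fin m) : H.Adj (mid i) 0 ↔ H.Adj 0 (mid i) := H.adj_comm _ _
  have hmid1 (i : Fin m) : H.Adj (mid i) 1 ↔ H.Adj 1 (mid i) := H.adj_comm _ _
  rcases vertex_cases u with rfl | rfl | ⟨i, rfl⟩ <;>
    rcases vertex_cases v with rfl | rfl | ⟨j, rfl⟩ <;> simp_all [H.adj_comm 1 0]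

lemma isAcyclic_ofCode_of_forall_ne {b : Bool} {g : Fin m → Bool × Bool}
    (hg : ∀ i, g i ≠ (true, true)) : (ofCode (b, g)).IsAcyclic := by
  have hg' : ∀ i, (g i).2 → (g i).1 = false := fun i h2 =>
    Bool.eq_false_iff.mpr fun h1 => hg i (Prod.ext h1 h2)
  -- Rooted at `x`: `y` hangs from `x`, and `z` from `x` if `xz` is present, else from `y`.
  refine isAcyclic_of_forall_adj_parent
    (Fin.cons 0 (Fin.cons 0 fun i => if (g i).1 then 0 else 1))
    (Fin.cons 0 (Fin.cons 1 fun _ => 2)) (fun v hv => ?_) (fun u v huv => ?_)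
  · rcases vertex_cases v with rfl | rfl | ⟨i, rfl⟩ <;> simp at hv ⊢
    split_ifs <;> simp
  · rcases vertex_cases u with rfl | rfl | ⟨i, rfl⟩ <;>
      rcases vertex_cases v with rfl | rfl | ⟨j, rfl⟩ <;> simp_all

lemma isAcyclic_ofCode_of_unique {g : Fin m → Bool × Bool} {k : Fin m} (hk : g k = (true, true))
    (hg : ∀ i ≠ k, g i ≠ (true, true)) : (ofCode (false, g)).IsAcyclic := by
  -- As above, except that `y` now hangs from `mid k`, which hangs from `x`.
  refine isAcyclic_of_forall_adj_parent
    (Fin.cons 0 (Fin.cons (mid k) fun i => if (g i).1 then 0 else 1))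
    (Fin.cons 0 (Fin.cons 2 fun i => if i = k then 1 else 3)) (fun v hv => ?_) (fun u v huv => ?_)
  · rcases vertex_cases v with rfl | rfl | ⟨i, rfl⟩ <;> simp at hv ⊢
    split_ifs <;> simp_all
  · rcases vertex_cases u with rfl | rfl | ⟨i, rfl⟩ <;>
      rcases vertex_cases v with rfl | rfl | ⟨j, rfl⟩ <;> simp_all
    all_goals grind

theorem isAcyclic_ofCode_iff {b : Bool} {g : Fin m → Bool × Bool} :
    (ofCode (b, g)).IsAcyclic ↔ (∀ i, g i ≠ (true, true)) ∨
      (b = false ∧ ∃ k, g k = (true, true) ∧ ∀ i ≠ k, g i ≠ (true, true)) := by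
  refine ⟨fun h => ?_, ?_⟩
  · by_cases hex : ∃ k, g k = (true, true)
    · obtain ⟨k, hk⟩ := hex
      have h0 : (ofCode (b, g)).Adj 0 (mid k) := by simp [hk]
      have h1 : (ofCode (b, g)).Adj (mid k) 1 := by simp [hk]
      refine .inr ⟨?_, k, hk, fun i hik hi => ?_⟩
      · by_contra hb
        exact not_isAcyclic_of_triangle h0 h1 (by simpa using hb) h
      · have h0' : (ofCode (b, g)).Adj 0 (mid i) := by simp [hi]
        have h1' : (ofCode (b, g)).Adj 1 (mid i) := by simp [hi]
        exact not_isAcyclic_of_square h0 h1 h1' h0'.symm (by simp) (by simpa using hik.symm) h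
    · exact .inl fun k hk => hex ⟨k, hk⟩
  · rintro (hg | ⟨rfl, k, hk, hg⟩)
    · exact isAcyclic_ofCode_of_forall_ne hg
    · exact isAcyclic_ofCode_of_unique hk hg

theorem connected_ofCode_iff {b : Bool} {g : Fin m → Bool × Bool} :
    (ofCode (b, g)).Connected ↔ (∀ i, g i ≠ (false, false)) ∧
      (b = true ∨ ∃ k, g k = (true, true)) := by
  refine ⟨fun h => ⟨fun i hi => ?_, ?_⟩, fun ⟨hg, hb⟩ => ?_⟩
  · obtain ⟨v, hv⟩ := (h.preconnected 0 (mid i)).nonempty_neighborSet_right (by simp)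
    rcases vertex_cases v with rfl | rfl | ⟨j, rfl⟩ <;> simp_all
  · by_contra! hcon
    obtain ⟨hb, hg⟩ := hcon
    have hg' : ∀ i, (g i).1 → (g i).2 = false := fun i h1 =>
      Bool.eq_false_iff.mpr fun h2 => hg i (Prod.ext h1 h2)
    have := (h.preconnected 0 1).eq_of_forall_adj
      (φ := Fin.cons false (Fin.cons true fun i => (g i).2)) (fun u v huv => ?_)
    · simp at this
    · rcases vertex_cases u with rfl | rfl | ⟨i, rfl⟩ <;>
        rcases vertex_cases v with rfl | rfl | ⟨j, rfl⟩ <;> simp_all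
  · have h01 : (ofCode (b, g)).Reachable 0 1 := by
      rcases hb with hb | ⟨k, hk⟩
      · exact Adj.reachable (by simpa using hb)
      · exact (Adj.reachable (by simp [hk]) : (ofCode (b, g)).Reachable 0 (mid k)).trans
          (Adj.reachable (by simp [hk]))
    rw [connected_iff_exists_forall_reachable]
    refine ⟨0, fun v => ?_⟩
    rcases vertex_cases v with rfl | rfl | ⟨i, rfl⟩
    · rfl
    · exact h01
    · rcases hi : g i with ⟨_ | _, _ | _⟩
      · exact absurd hi (hg i)
      · exact h01.trans (Adj.reachable (by simp [hi]))
      all_goals exact Adj.reachable (by simp [hi])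

lemma card_subgraphs_eq_card {P : SimpleGraph (Fin (m + 2)) → Prop} (s : Finset (Code m))
    (hs : ∀ c, P (ofCode c) ↔ c ∈ s) : Nat.card {H // H ≤ thetaGraph m ∧ P H} = #s := by
  rw [← Nat.card_eq_finsetCard]
  refine (Nat.card_congr (Equiv.ofBijective
    (fun c => ⟨ofCode c.1, ofCode_le c.1, (hs c.1).mpr c.2⟩)
    ⟨fun c c' h => Subtype.ext (ofCode_injective (congrArg Subtype.val h)), ?_⟩)).symm
  rintro ⟨H, hle, hP⟩
  obtain ⟨c, rfl⟩ := exists_ofCode_eq hle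
  exact ⟨⟨c, (hs c).mp hP⟩, rfl⟩

/-- A spoke state in `full` completes the path `x – z – y`; one in `pendant` makes `z` a leaf. -/
def full : Finset (Bool × Bool) := {(true, true)}

def pendant : Finset (Bool × Bool) := {(true, false), (false, true)}

lemma mem_pendant {x : Bool × Bool} : x ∈ pendant ↔ x ≠ (true, true) ∧ x ≠ (false, false) := by
  revert x; decide

lemma card_trees_with_xy :
    Nat.card {H // H ≤ thetaGraph m ∧ H.IsAcyclic ∧ H.Adj 0 1 ∧ H.Connected} = 2 ^ m := by
  rw [card_subgraphs_eq_card ({true} ×ˢ Fintype.piFinset fun _ => pendant)]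
  · simp [pendant]
  rintro ⟨b, g⟩
  simp [isAcyclic_ofCode_iff, connected_ofCode_iff, mem_pendant]
  grind

lemma card_forests_with_xy :
    Nat.card {H // H ≤ thetaGraph m ∧ H.IsAcyclic ∧ H.Adj 0 1} = 3 ^ m := by
  rw [card_subgraphs_eq_card ({true} ×ˢ Fintype.piFinset fun _ => fullᶜ)]
  · simp [full, card_compl]
  rintro ⟨b, g⟩
  simp [isAcyclic_ofCode_iff, full]
  grind

lemma card_forests :
    Nat.card {H // H ≤ thetaGraph m ∧ H.IsAcyclic} = 2 * 3 ^ m + m * 3 ^ (m - 1) := by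
  rw [card_subgraphs_eq_card ((univ ×ˢ Fintype.piFinset fun _ => fullᶜ) ∪
    {false} ×ˢ ({g | ∃ i, g i ∈ full ∧ ∀ j ≠ i, g j ∈ fullᶜ} : Finset (Fin m → Bool × Bool)))]
  · rw [card_union_of_disjoint, card_product, card_product,
      Fintype.card_filter_exists_mem_forall_ne_mem]
    · simp [full, card_compl]
    · exact disjoint_compl_right
    · rw [Finset.disjoint_left]
      rintro ⟨b, g⟩ h1 h2
      simp [full] at h1 h2
      grind
  rintro ⟨b, g⟩
  simp [isAcyclic_ofCode_iff, full]
  grind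

lemma card_trees :
    Nat.card {H // H ≤ thetaGraph m ∧ H.IsAcyclic ∧ H.Connected} = 2 ^ m + m * 2 ^ (m - 1) := by
  rw [card_subgraphs_eq_card (({true} ×ˢ Fintype.piFinset fun _ => pendant) ∪
    {false} ×ˢ ({g | ∃ i, g i ∈ full ∧ ∀ j ≠ i, g j ∈ pendant} : Finset (Fin m → Bool × Bool)))]
  · rw [card_union_of_disjoint, card_product, card_product,
      Fintype.card_filter_exists_mem_forall_ne_mem]
    · simp [full, pendant]
    · decide
    · rw [Finset.disjoint_left]
      rintro ⟨b, g⟩ h1 h2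
      simp at h1 h2
      grind
  rintro ⟨b, g⟩
  simp [isAcyclic_ofCode_iff, connected_ofCode_iff, full, mem_pendant]
  grind

end ThetaGraph

/-- Under the uniform measure on spanning forests of `thetaGraph m` with `m > 6`, the
events "the edge `xy` is in the forest" and "the forest is a spanning tree" are
strictly negatively correlated (stated in cross-multiplied counting form). -/
theorem stmt_16 (m : ℕ) (hm : 6 < m) :
    Nat.card {H : SimpleGraph (Fin (m + 2)) //
        H ≤ thetaGraph m ∧ H.IsAcyclic ∧ H.Adj 0 1 ∧ H.Connected} *
      Nat.card {H : SimpleGraph (Fin (m + 2)) // H ≤ thetaGraph m ∧ H.IsAcyclic} <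
    Nat.card {H : SimpleGraph (Fin (m + 2)) //
        H ≤ thetaGraph m ∧ H.IsAcyclic ∧ H.Adj 0 1} *
      Nat.card {H : SimpleGraph (Fin (m + 2)) //
        H ≤ thetaGraph m ∧ H.IsAcyclic ∧ H.Connected} := by
  rw [ThetaGraph.card_trees_with_xy, ThetaGraph.card_forests, ThetaGraph.card_forests_with_xy,
    ThetaGraph.card_trees]
  obtain ⟨k, rfl⟩ : ∃ k, m = k + 1 := ⟨m - 1, by omega⟩
  rw [Nat.add_sub_cancel]
  have hforests : 2 ^ (k + 1) * (2 * 3 ^ (k + 1) + (k + 1) * 3 ^ k) =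
      2 ^ k * 3 ^ k * (2 * (k + 1) + 12) := by ring
  have htrees : 3 ^ (k + 1) * (2 ^ (k + 1) + (k + 1) * 2 ^ k) =
      2 ^ k * 3 ^ k * (3 * (k + 1) + 6) := by ring
  rw [hforests, htrees]
  exact Nat.mul_lt_mul_of_pos_left (by omega) (by positivity)
end

section
/- Let G = (V,E) be a finite graph with edge weights p_e = q for all e, and let φ_q = φ_{p,q} be the corresponding random cluster measure. As q → 0⁺, φ_q converges to the uniform measure on spanning forests of G: for every η ∈ {0,1}^E, lim_{q→0⁺} φ_q(η) = 1/N if η is a forest (acyclic), and 0 otherwise, where N is the number of spanning forests of G. -/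
open Finset
open scoped Classical

/-!
With every `p_e = q`, a configuration with `j` open edges and `k` clusters has weight
`q ^ (j + k) * (1 - q) ^ (|E| - j) = q ^ (|V| + c) * (1 - q) ^ (|E| - j)`, where `c = k + j - |V|`
is the cyclomatic number of the open subgraph. The factor `q ^ |V|` cancels in `φ_q`, and what
remains is continuous in `q` and at `q = 0` equals `1` on forests (`c = 0`) and `0` elsewhere.

The inequality `k + j ≥ |V|`, with equality exactly for forests, holds because a forest is the
disjoint union of its components, each a tree with one edge fewer than vertices, and a general
graph has a spanning forest with the same components and, unless it is acyclic, fewer edges.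
-/

namespace SimpleGraph

variable {V : Type*} {G : SimpleGraph V}

lemma ConnectedComponent.two_mul_card_edgeSet_toSimpleGraph [Fintype V]
    (c : G.ConnectedComponent) :
    2 * Nat.card c.toSimpleGraph.edgeSet = ∑ v with G.connectedComponentMk v = c, G.degree v := by
  rw [Nat.card_eq_fintype_card, ← edgeFinset_card, ← sum_degrees_eq_twice_card_edges]
  calc ∑ v, c.toSimpleGraph.degree v = ∑ v : c, G.degree v :=
        Finset.sum_congr rfl fun v _ => by
          convert degree_induce_of_neighborSet_subset fun w hw => c.mem_supp_of_adj_mem_supp v.2 hw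
          · exact Iff.rfl
          · rfl
    _ = _ := by
      refine (Finset.sum_subtype _ (fun v => ?_) (fun v => G.degree v)).symm
      show _ ↔ v ∈ c.supp
      simp

lemma sum_card_edgeSet_toSimpleGraph [Fintype V] :
    ∑ c : G.ConnectedComponent, Nat.card c.toSimpleGraph.edgeSet = Nat.card G.edgeSet := by
  refine Nat.eq_of_mul_eq_mul_left two_pos ?_
  rw [mul_sum, Nat.card_eq_fintype_card, ← edgeFinset_card, ← sum_degrees_eq_twice_card_edges,
    ← sum_fiberwise univ G.connectedComponentMk]
  simp_rw [ConnectedComponent.two_mul_card_edgeSet_toSimpleGraph]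

lemma sum_card_connectedComponent [Fintype V] :
    ∑ c : G.ConnectedComponent, Nat.card c = Nat.card V := by
  rw [Nat.card_eq_fintype_card (α := V), ← card_univ, card_eq_sum_card_fiberwise
    (f := G.connectedComponentMk) (t := univ) fun _ _ => mem_coe.2 (mem_univ _)]
  refine sum_congr rfl fun c _ => ?_
  rw [Nat.card_eq_fintype_card, ← Fintype.card_subtype]
  rfl

lemma IsAcyclic.card_connectedComponent_add_card_edgeSet [Finite V] (hG : G.IsAcyclic) :
    Nat.card G.ConnectedComponent + Nat.card G.edgeSet = Nat.card V := by
  have := Fintype.ofFinite V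
  rw [← sum_card_edgeSet_toSimpleGraph, ← sum_card_connectedComponent (G := G),
    Nat.card_eq_fintype_card, Fintype.card_eq_sum_ones, ← sum_add_distrib]
  refine sum_congr rfl fun c _ => ?_
  rw [add_comm]
  exact (isTree_iff_connected_and_card.1 (hG.isTree_connectedComponent c)).2

lemma card_connectedComponent_eq_of_reachable_eq {F : SimpleGraph V}
    (h : F.Reachable = G.Reachable) :
    Nat.card F.ConnectedComponent = Nat.card G.ConnectedComponent := by
  unfold ConnectedComponent
  rw [h]

lemma exists_isAcyclic_le_card_edgeSet_add_eq [Finite V] :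
    ∃ F ≤ G, F.IsAcyclic ∧
      Nat.card G.ConnectedComponent + Nat.card F.edgeSet = Nat.card V := by
  obtain ⟨F, hle, hF, hreach⟩ := G.exists_isAcyclic_reachable_eq_le
  exact ⟨F, hle, hF, card_connectedComponent_eq_of_reachable_eq hreach ▸
    hF.card_connectedComponent_add_card_edgeSet⟩

-- The paper's `c(η)` for `G = openSub ends η`; the subtraction never truncates
-- (`card_add_cyclomaticNumber`).
noncomputable def cyclomaticNumber (G : SimpleGraph V) : ℕ :=
  Nat.card G.ConnectedComponent + Nat.card G.edgeSet - Nat.card V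

lemma card_add_cyclomaticNumber [Finite V] :
    Nat.card V + G.cyclomaticNumber = Nat.card G.ConnectedComponent + Nat.card G.edgeSet := by
  obtain ⟨F, hle, -, hF⟩ := G.exists_isAcyclic_le_card_edgeSet_add_eq
  have : Nat.card F.edgeSet ≤ Nat.card G.edgeSet :=
    Nat.card_mono (Set.toFinite _) (edgeSet_mono hle)
  unfold cyclomaticNumber
  omega

lemma cyclomaticNumber_eq_zero_iff [Finite V] : G.cyclomaticNumber = 0 ↔ G.IsAcyclic := by
  refine ⟨fun h => ?_, fun hG => by
    simp only [cyclomaticNumber, hG.card_connectedComponent_add_card_edgeSet, Nat.sub_self]⟩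
  obtain ⟨F, hle, hF, hcard⟩ := G.exists_isAcyclic_le_card_edgeSet_add_eq
  have hFG : F.edgeSet = G.edgeSet := by
    refine Set.eq_of_subset_of_ncard_le (edgeSet_mono hle) ?_ (Set.toFinite _)
    have := G.card_add_cyclomaticNumber
    simp only [Nat.card_coe_set_eq] at this hcard
    omega
  exact edgeSet_inj.1 hFG ▸ hF

end SimpleGraph

section RandomCluster

variable {V E : Type*} {ends : E → Sym2 V}

lemma edgeSet_openSub (hloop : ∀ f, ¬ (ends f).IsDiag) (η : E → Bool) :
    (openSub ends η).edgeSet = ends '' {f | η f = true} := by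
  ext e
  simp only [openSub, SimpleGraph.edgeSet_fromEdgeSet, Set.mem_sdiff, Set.mem_ofPred_eq,
    Set.mem_image]
  exact ⟨fun ⟨he, _⟩ => he, fun ⟨f, hf, hfe⟩ => ⟨⟨f, hf, hfe⟩, hfe ▸ hloop f⟩⟩

lemma card_edgeSet_openSub [Fintype E] (hinj : Function.Injective ends)
    (hloop : ∀ f, ¬ (ends f).IsDiag) (η : E → Bool) :
    Nat.card (openSub ends η).edgeSet = #{f | η f = true} := by
  rw [edgeSet_openSub hloop, Nat.card_coe_set_eq, Set.ncard_image_of_injective _ hinj,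
    ← Set.ncard_coe_finset, coe_filter_univ]

/-- `rcWeight` at `p ≡ q` with the common factor `q ^ |V|` removed. -/
noncomputable def rcReducedWeight [Fintype E] (ends : E → Sym2 V) (η : E → Bool) (q : ℝ) :
    ℝ :=
  q ^ (openSub ends η).cyclomaticNumber * (1 - q) ^ #{f | η f = false}

lemma rcWeight_const_eq [Finite V] [Fintype E] (hinj : Function.Injective ends)
    (hloop : ∀ f, ¬ (ends f).IsDiag) (q : ℝ) (η : E → Bool) :
    rcWeight ends (fun _ => q) q η = q ^ Nat.card V * rcReducedWeight ends η q := by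
  have hexp := (openSub ends η).card_add_cyclomaticNumber
  rw [card_edgeSet_openSub hinj hloop] at hexp
  simp only [rcWeight, rcReducedWeight, numComp, prod_ite, prod_const, Bool.not_eq_true]
  rw [← mul_assoc, ← pow_add, mul_right_comm, ← pow_add, add_comm, hexp]

lemma rcMeasure_const_eq [Fintype V] [Fintype E] [DecidableEq E] (hinj : Function.Injective ends)
    (hloop : ∀ f, ¬ (ends f).IsDiag) {q : ℝ} (hq : q ≠ 0) (η : E → Bool) :
    rcMeasure ends (fun _ => q) q η =
      rcReducedWeight ends η q / ∑ τ, rcReducedWeight ends τ q := by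
  simp only [rcMeasure, rcWeight_const_eq hinj hloop]
  rw [← mul_sum, mul_div_mul_left _ _ (pow_ne_zero _ hq)]

lemma rcReducedWeight_zero [Finite V] [Fintype E] (η : E → Bool) :
    rcReducedWeight ends η 0 = if (openSub ends η).IsAcyclic then 1 else 0 := by
  simp [rcReducedWeight, zero_pow_eq, SimpleGraph.cyclomaticNumber_eq_zero_iff]

lemma continuous_rcReducedWeight [Fintype E] (η : E → Bool) :
    Continuous (rcReducedWeight ends η) := by
  unfold rcReducedWeight
  fun_prop

lemma sum_rcReducedWeight_zero [Finite V] [Fintype E] [DecidableEq E] :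
    ∑ τ, rcReducedWeight ends τ 0 =
      Nat.card {τ : E → Bool // (openSub ends τ).IsAcyclic} := by
  simp only [rcReducedWeight_zero, sum_boole, Nat.card_eq_fintype_card, Fintype.card_subtype]

lemma card_isAcyclic_openSub_pos [Fintype E] :
    0 < Nat.card {τ : E → Bool // (openSub ends τ).IsAcyclic} := by
  have hempty : openSub ends (fun _ => false) = ⊥ := by simp [openSub]
  have : Nonempty {τ : E → Bool // (openSub ends τ).IsAcyclic} :=
    ⟨⟨fun _ => false, hempty ▸ SimpleGraph.isAcyclic_bot⟩⟩
  exact Nat.card_pos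

end RandomCluster

/-- As `q → 0⁺` with all edge weights `p_e = q`, the random-cluster measure converges
to the uniform measure on spanning forests (acyclic edge configurations). -/
theorem stmt_17 {V E : Type*} [Fintype V] [Fintype E] [DecidableEq E]
    (ends : E → Sym2 V)
    (hinj : Function.Injective ends) (hloop : ∀ f, ¬ (ends f).IsDiag)
    (η : E → Bool) :
    Filter.Tendsto (fun q : ℝ => rcMeasure ends (fun _ => q) q η)
      (nhdsWithin 0 (Set.Ioi 0))
      (nhds (if (openSub ends η).IsAcyclic then
        ((Nat.card {τ : E → Bool // (openSub ends τ).IsAcyclic} : ℝ))⁻¹ else 0)) := by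
  have hN := sum_rcReducedWeight_zero (V := V) (ends := ends)
  have hlim : Filter.Tendsto
      (fun q => rcReducedWeight ends η q / ∑ τ, rcReducedWeight ends τ q) (nhds 0)
      (nhds (rcReducedWeight ends η 0 / ∑ τ, rcReducedWeight ends τ 0)) :=
    ((continuous_rcReducedWeight η).tendsto 0).div
      ((continuous_finsetSum _ fun τ _ => continuous_rcReducedWeight τ).tendsto 0)
      (hN ▸ Nat.cast_ne_zero.2 card_isAcyclic_openSub_pos.ne')
  rw [rcReducedWeight_zero, hN, ite_div, one_div, zero_div] at hlim
  refine (hlim.mono_left nhdsWithin_le_nhds).congr' ?_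
  filter_upwards [self_mem_nhdsWithin] with q hq
  exact (rcMeasure_const_eq hinj hloop (ne_of_gt hq) η).symm
end
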